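/- Let φ be an LTL_P formula, M a ℤ-model, M′ the induced ℕ-model of M over Σ_φ, and let ◯_F ψ be a temporal subformula of φ. Then for every n ∈ ℕ: (1) M′,(n+1) ⊨ A₋^{◯_Fψ} if and only if M′,n ⊨ ψ̄₋, and (2) M′,n ⊨ A₊^{◯_Fψ} if and only if M′,(n+1) ⊨ ψ̄₊. -/
import Mathlib


/-- LTL_P formulas over propositional variables `V`:
`p | ¬φ | φ₁ ∧ φ₂ | ◯_F φ | ◯_P φ | ◇_F φ | ◇_P φ`. -/
inductive LTLP (V : Type) : Type
  | var   : V → LTLP V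
  | neg   : LTLP V → LTLP V
  | conj  : LTLP V → LTLP V → LTLP V
  | nextF : LTLP V → LTLP V
  | nextP : LTLP V → LTLP V
  | diaF  : LTLP V → LTLP V
  | diaP  : LTLP V → LTLP V
  deriving DecidableEq

/-- Satisfaction `M,n ⊨ φ` of an LTL_P formula in a ℤ-model `M : ℤ → V → Prop`. -/
def ZSat {V : Type} (M : ℤ → V → Prop) : ℤ → LTLP V → Prop
  | n, .var p    => M n p
  | n, .neg ψ    => ¬ ZSat M n ψ
  | n, .conj ψ χ => ZSat M n ψ ∧ ZSat M n χ
  | n, .nextF ψ  => ZSat M (n + 1) ψ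
  | n, .nextP ψ  => ZSat M (n - 1) ψ
  | n, .diaF ψ   => ∃ m, n ≤ m ∧ ZSat M m ψ
  | n, .diaP ψ   => ∃ m, m ≤ n ∧ ZSat M m ψ

/-- Pure-future LTL formulas (no past operators). -/
inductive LTLF (W : Type) : Type
  | var   : W → LTLF W
  | neg   : LTLF W → LTLF W
  | conj  : LTLF W → LTLF W → LTLF W
  | nextF : LTLF W → LTLF W
  | diaF  : LTLF W → LTLF W
  deriving DecidableEq

/-- Satisfaction `N,n ⊨ φ` of a pure-future formula in an ℕ-model `N : ℕ → W → Prop`. -/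
def NSat {W : Type} (N : ℕ → W → Prop) : ℕ → LTLF W → Prop
  | n, .var p    => N n p
  | n, .neg ψ    => ¬ NSat N n ψ
  | n, .conj ψ χ => NSat N n ψ ∧ NSat N n χ
  | n, .nextF ψ  => NSat N (n + 1) ψ
  | n, .diaF ψ   => ∃ m, n ≤ m ∧ NSat N m ψ

/-- The extended alphabet Σ_φ: variables `p₊`, `p₋` for propositional variables `p`,
and `A₊^{Oψ}`, `A₋^{Oψ}` indexed by (temporal) formulas `Oψ`. -/
inductive Alph (V : Type) : Type
  | pos  : V → Alph V
  | negv : V → Alph V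
  | Apos : LTLP V → Alph V
  | Aneg : LTLP V → Alph V
  deriving DecidableEq

/-- `ξ.isTemporal` holds iff the outermost symbol of `ξ` is a temporal operator. -/
def LTLP.isTemporal {V : Type} : LTLP V → Prop
  | .nextF _ => True
  | .nextP _ => True
  | .diaF _  => True
  | .diaP _  => True
  | _        => False

/-- The translation `ξ̄_∗` (`s = true` for `∗ = +`, `s = false` for `∗ = −`):
a propositional formula over `Alph V`. -/
def bar {V : Type} (s : Bool) : LTLP V → LTLF (Alph V)
  | .var p    => .var (if s then .pos p else .negv p)
  | .neg ψ    => .neg (bar s ψ)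
  | .conj ψ χ => .conj (bar s ψ) (bar s χ)
  | .nextF ψ  => .var (if s then .Apos (.nextF ψ) else .Aneg (.nextF ψ))
  | .nextP ψ  => .var (if s then .Apos (.nextP ψ) else .Aneg (.nextP ψ))
  | .diaF ψ   => .var (if s then .Apos (.diaF ψ) else .Aneg (.diaF ψ))
  | .diaP ψ   => .var (if s then .Apos (.diaP ψ) else .Aneg (.diaP ψ))

/-- The set `sub φ` of subformulas of `φ`. -/
def subFmls {V : Type} : LTLP V → Set (LTLP V)
  | .var p    => {LTLP.var p}
  | .neg ψ    => insert (.neg ψ) (subFmls ψ)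
  | .conj ψ χ => insert (.conj ψ χ) (subFmls ψ ∪ subFmls χ)
  | .nextF ψ  => insert (.nextF ψ) (subFmls ψ)
  | .nextP ψ  => insert (.nextP ψ) (subFmls ψ)
  | .diaF ψ   => insert (.diaF ψ) (subFmls ψ)
  | .diaP ψ   => insert (.diaP ψ) (subFmls ψ)

/-- The induced ℕ-model `M′` over `Alph V` of a ℤ-model `M`. -/
def induced {V : Type} (M : ℤ → V → Prop) : ℕ → Alph V → Prop
  | n, .pos p  => M (n : ℤ) p
  | n, .negv p => M (-(n : ℤ)) p
  | n, .Apos ξ => ZSat M (n : ℤ) ξ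
  | n, .Aneg ξ => ZSat M (-(n : ℤ)) ξ

/-- The conjunct of part (iii) of the pure-future translation associated with a temporal
subformula, evaluated at time `n` (trivial for non-temporal formulas). -/
def ClauseAt {V : Type} (N : ℕ → Alph V → Prop) (n : ℕ) : LTLP V → Prop
  | .nextF ψ =>
      (N (n + 1) (.Aneg (.nextF ψ)) ↔ NSat N n (bar false ψ)) ∧
      (N n (.Apos (.nextF ψ)) ↔ NSat N (n + 1) (bar true ψ))
  | .nextP ψ =>
      (N (n + 1) (.Apos (.nextP ψ)) ↔ NSat N n (bar true ψ)) ∧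
      (N n (.Aneg (.nextP ψ)) ↔ NSat N (n + 1) (bar false ψ))
  | .diaF ψ =>
      (N (n + 1) (.Aneg (.diaF ψ)) ↔ (N n (.Aneg (.diaF ψ)) ∨ NSat N (n + 1) (bar false ψ))) ∧
      (N n (.Apos (.diaF ψ)) ↔ ∃ m, n ≤ m ∧ NSat N m (bar true ψ))
  | .diaP ψ =>
      (N (n + 1) (.Apos (.diaP ψ)) ↔ (N n (.Apos (.diaP ψ)) ∨ NSat N (n + 1) (bar true ψ))) ∧
      (N n (.Aneg (.diaP ψ)) ↔ ∃ m, n ≤ m ∧ NSat N m (bar false ψ))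
  | _ => True

/-- `N,0 ⊨ φ^ℕ`: satisfaction at time 0 of the pure-future translation of `φ`, i.e. the
conjunction of (i) `φ̄₊`, (ii) `v₊ ↔ v₋` at time 0 for all variable pairs of Σ_φ, and
(iii) `□_F` of the clauses for all temporal subformulas of `φ` (so: the clauses hold at all
`n ∈ ℕ`). -/
def SatPF {V : Type} (N : ℕ → Alph V → Prop) (φ : LTLP V) : Prop :=
  NSat N 0 (bar true φ) ∧
  (∀ p : V, LTLP.var p ∈ subFmls φ → (N 0 (.pos p) ↔ N 0 (.negv p))) ∧
  (∀ ξ ∈ subFmls φ, ξ.isTemporal → (N 0 (.Apos ξ) ↔ N 0 (.Aneg ξ))) ∧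
  (∀ n : ℕ, ∀ ξ ∈ subFmls φ, ClauseAt N n ξ)

theorem bar_sat {V : Type} (M : ℤ → V → Prop) (ψ : LTLP V) :
    ∀ (s : Bool) (n : ℕ),
      NSat (induced M) n (bar s ψ) ↔ ZSat M (if s then (n : ℤ) else -(n : ℤ)) ψ := by
  induction ψ with
  | var p => intro s n; cases s <;> simp [bar, NSat, induced, ZSat]
  | neg ψ ih => intro s n; simp [bar, NSat, ZSat, ih]
  | conj ψ χ ih1 ih2 => intro s n; simp [bar, NSat, ZSat, ih1, ih2]
  | nextF ψ _ => intro s n; cases s <;> simp [bar, NSat, induced]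
  | nextP ψ _ => intro s n; cases s <;> simp [bar, NSat, induced]
  | diaF ψ _ => intro s n; cases s <;> simp [bar, NSat, induced]
  | diaP ψ _ => intro s n; cases s <;> simp [bar, NSat, induced]

/-- For a temporal subformula `◯_F ψ` of `φ` and the induced ℕ-model `M′`
of a ℤ-model `M`, for every `n ∈ ℕ`:
(1) `M′,n+1 ⊨ A₋^{◯_Fψ}` iff `M′,n ⊨ ψ̄₋`, and
(2) `M′,n ⊨ A₊^{◯_Fψ}` iff `M′,n+1 ⊨ ψ̄₊`. -/
theorem induced_model_nextF_clauses {V : Type} (φ : LTLP V) (M : ℤ → V → Prop)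
    (ψ : LTLP V) (h : LTLP.nextF ψ ∈ subFmls φ) :
    ∀ n : ℕ,
      (induced M (n + 1) (.Aneg (.nextF ψ)) ↔ NSat (induced M) n (bar false ψ)) ∧
      (induced M n (.Apos (.nextF ψ)) ↔ NSat (induced M) (n + 1) (bar true ψ)) := by
  intro n
  constructor
  · show ZSat M (-((n:ℕ)+1 : ℕ) : ℤ) (LTLP.nextF ψ) ↔ _
    rw [bar_sat M ψ false n]
    show ZSat M _ ψ ↔ ZSat M _ ψ
    norm_num
  · show ZSat M ((n:ℤ)) (LTLP.nextF ψ) ↔ _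
    rw [bar_sat M ψ true (n+1)]
    show ZSat M _ ψ ↔ ZSat M _ ψ
    norm_num
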